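/- Equivalence with the replicated (latent variable) formulation: the infimum over x ∈ ℝ^d of (1/n)‖Ψx − y‖² + 2τ Ω^G_p(x) equals the infimum over v = (v_1,...,v_B) ∈ Π_r ℝ^{G_r} of (1/n)‖Ψ P* v − y‖² + 2τ Σ_r ‖v_r‖_p, where P* v = Σ_r P_r* v_r. Moreover x* is a minimizer of the former iff x* = P* v* for some minimizer v* of the latter. -/

import Mathlib

/-! The latent objective `g` dominates `f ∘ P*`, and on each fibre of the surjection `P*` it
comes down to `f`, because the infimum defining `Ω^G_p` is attained: the fibre is closed and
`v ↦ Σ_r ‖v_r‖_p` is continuous and coercive. These two properties alone force equal infima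
and make the minimizers of `f` exactly the images under `P*` of the minimizers of `g`. -/

open scoped Classical ENNReal NNReal

noncomputable def pNormOn (p : ℝ≥0∞) [Fact (1 ≤ p)] {ι : Type*} [Fintype ι] (v : ι → ℝ) : ℝ :=
  ‖(WithLp.equiv p (ι → ℝ)).symm v‖

noncomputable def grpNorm {d : ℕ} (p : ℝ≥0∞) [Fact (1 ≤ p)] (G : Finset (Fin d))
    (x : Fin d → ℝ) : ℝ :=
  pNormOn p (fun j : {j : Fin d // j ∈ G} => x j.1)

def embed {d : ℕ} (G : Finset (Fin d)) (v : {j : Fin d // j ∈ G} → ℝ) : Fin d → ℝ :=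
  fun j => if h : j ∈ G then v ⟨j, h⟩ else 0

noncomputable def Omega {d B : ℕ} (p : ℝ≥0∞) [Fact (1 ≤ p)] (G : Fin B → Finset (Fin d))
    (x : Fin d → ℝ) : ℝ :=
  sInf { s | ∃ v : (r : Fin B) → {j : Fin d // j ∈ G r} → ℝ,
    (∑ r, embed (G r) (v r)) = x ∧ s = ∑ r, pNormOn p (v r) }

noncomputable def nrm2 {d : ℕ} (x : Fin d → ℝ) : ℝ := Real.sqrt (∑ j, (x j) ^ 2)

section InfimalProjection

variable {α X V : Type*}

theorem sInf_range_eq_of_le_comp_of_exists_le [ConditionallyCompleteLinearOrder α]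
    {P : V → X} {φ : X → α} {ψ : V → α}
    (hle : ∀ v, φ (P v) ≤ ψ v) (hex : ∀ x, ∃ v, P v = x ∧ ψ v ≤ φ x) :
    sInf (Set.range φ) = sInf (Set.range ψ) := by
  refine csInf_eq_csInf_of_forall_exists_le ?_ ?_
  · rintro _ ⟨x, rfl⟩
    obtain ⟨v, -, hv⟩ := hex x
    exact ⟨ψ v, Set.mem_range_self v, hv⟩
  · rintro _ ⟨v, rfl⟩
    exact ⟨φ (P v), Set.mem_range_self _, hle v⟩

theorem forall_le_iff_exists_forall_le_of_le_comp_of_exists_le [Preorder α]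
    {P : V → X} {φ : X → α} {ψ : V → α}
    (hle : ∀ v, φ (P v) ≤ ψ v) (hex : ∀ x, ∃ v, P v = x ∧ ψ v ≤ φ x) (x : X) :
    (∀ x', φ x ≤ φ x') ↔ ∃ v, (∀ v', ψ v ≤ ψ v') ∧ x = P v := by
  constructor
  · intro hx
    obtain ⟨v, rfl, hv⟩ := hex x
    exact ⟨v, fun v' => hv.trans ((hx (P v')).trans (hle v')), rfl⟩
  · rintro ⟨v, hv, rfl⟩ x'
    obtain ⟨v', rfl, hv'⟩ := hex x'
    exact (hle v).trans ((hv v').trans hv')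

end InfimalProjection

section PNorm

variable (p : ℝ≥0∞) [Fact (1 ≤ p)] {ι : Type*} [Fintype ι]

theorem pNormOn_nonneg (v : ι → ℝ) : 0 ≤ pNormOn p v := norm_nonneg _

theorem norm_le_pNormOn (v : ι → ℝ) : ‖v‖ ≤ pNormOn p v :=
  (pi_norm_le_iff_of_nonneg (pNormOn_nonneg p v)).2 fun i =>
    PiLp.norm_apply_le ((WithLp.equiv p (ι → ℝ)).symm v) i

theorem continuous_pNormOn : Continuous (pNormOn p (ι := ι)) :=
  continuous_norm.comp (PiLp.continuous_toLp p (fun _ : ι => ℝ))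

end PNorm

section Latent

open Filter

variable {d B : ℕ}

theorem continuous_embed (G : Finset (Fin d)) : Continuous (embed G) := by
  refine continuous_pi fun j => ?_
  by_cases h : j ∈ G
  · simpa [embed, h] using continuous_apply (⟨j, h⟩ : {j // j ∈ G})
  · simpa [embed, h] using continuous_const

theorem exists_sum_embed_eq {G : Fin B → Finset (Fin d)} (hcover : ∀ j, ∃ r, j ∈ G r)
    (x : Fin d → ℝ) : ∃ v : (r : Fin B) → {j // j ∈ G r} → ℝ, ∑ r, embed (G r) (v r) = x := by
  choose owner h_owner using hcover
  refine ⟨fun r i => if owner i = r then x i else 0, funext fun j => ?_⟩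
  have hterm : ∀ r, embed (G r) (fun i => if owner i = r then x i else 0) j
      = if owner j = r then x j else 0 := by
    intro r
    by_cases hj : j ∈ G r
    · simp [embed, hj]
    · have : owner j ≠ r := fun h => hj (h ▸ h_owner j)
      simp [embed, hj, this]
  simp [Finset.sum_apply, hterm]

variable (p : ℝ≥0∞) [Fact (1 ≤ p)]

theorem Omega_le_sum_pNormOn (G : Fin B → Finset (Fin d))
    (v : (r : Fin B) → {j // j ∈ G r} → ℝ) :
    Omega p G (∑ r, embed (G r) (v r)) ≤ ∑ r, pNormOn p (v r) := by
  refine csInf_le ⟨0, ?_⟩ ⟨v, rfl, rfl⟩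
  rintro _ ⟨w, -, rfl⟩
  exact Finset.sum_nonneg fun r _ => pNormOn_nonneg p (w r)

theorem exists_sum_embed_eq_and_sum_pNormOn_eq_Omega {G : Fin B → Finset (Fin d)}
    (hcover : ∀ j, ∃ r, j ∈ G r) (x : Fin d → ℝ) :
    ∃ v : (r : Fin B) → {j // j ∈ G r} → ℝ,
      ∑ r, embed (G r) (v r) = x ∧ ∑ r, pNormOn p (v r) = Omega p G x := by
  set F : ((r : Fin B) → {j // j ∈ G r} → ℝ) → ℝ := fun v => ∑ r, pNormOn p (v r)
  set fibre := {v : (r : Fin B) → {j // j ∈ G r} → ℝ | ∑ r, embed (G r) (v r) = x}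
  have hF : Continuous F :=
    continuous_finsetSum _ fun r _ => (continuous_pNormOn p).comp (continuous_apply r)
  have hfibre : IsClosed fibre :=
    isClosed_eq (continuous_finsetSum _ fun r _ => (continuous_embed _).comp (continuous_apply r))
      continuous_const
  have hcoercive : Tendsto F (cocompact _) atTop := by
    refine tendsto_atTop_mono (fun v => ?_) tendsto_norm_cocompact_atTop
    refine (pi_norm_le_iff_of_nonneg (Finset.sum_nonneg fun r _ => pNormOn_nonneg p (v r))).2
      fun r => (norm_le_pNormOn p (v r)).trans ?_
    exact Finset.single_le_sum (fun r _ => pNormOn_nonneg p (v r)) (Finset.mem_univ r)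
  obtain ⟨v₀, hv₀⟩ := exists_sum_embed_eq hcover x
  obtain ⟨v, hv, hmin⟩ := hF.continuousOn.exists_isMinOn' hfibre (x₀ := v₀) hv₀
    ((hcoercive.eventually_ge_atTop (F v₀)).filter_mono inf_le_left)
  refine ⟨v, hv, (IsLeast.csInf_eq ?_).symm⟩
  refine ⟨⟨v, hv, rfl⟩, ?_⟩
  rintro _ ⟨w, hw, rfl⟩
  exact hmin hw

end Latent

theorem stmt13_general {d n B : ℕ} (Psi : (Fin d → ℝ) →ₗ[ℝ] (Fin n → ℝ)) (y : Fin n → ℝ)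
    (τ : ℝ) (hτ : 0 < τ) (p : ℝ≥0∞) [Fact (1 ≤ p)]
    (G : Fin B → Finset (Fin d)) (hcover : ∀ j : Fin d, ∃ r, j ∈ G r) :
    let f : (Fin d → ℝ) → ℝ := fun x =>
      (1 / (n : ℝ)) * ∑ i, (Psi x i - y i) ^ 2 + 2 * τ * Omega p G x
    let g : ((r : Fin B) → {j : Fin d // j ∈ G r} → ℝ) → ℝ := fun v =>
      (1 / (n : ℝ)) * ∑ i, (Psi (∑ r, embed (G r) (v r)) i - y i) ^ 2 +
        2 * τ * ∑ r, pNormOn p (v r)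
    sInf (Set.range f) = sInf (Set.range g) ∧
    ∀ x : Fin d → ℝ, (∀ x', f x ≤ f x') ↔
      ∃ v, (∀ v', g v ≤ g v') ∧ x = ∑ r, embed (G r) (v r) := by
  intro f g
  have hle : ∀ v, f (∑ r, embed (G r) (v r)) ≤ g v := fun v =>
    add_le_add_right (mul_le_mul_of_nonneg_left (Omega_le_sum_pNormOn p G v) (by positivity)) _
  have hex : ∀ x, ∃ v, ∑ r, embed (G r) (v r) = x ∧ g v ≤ f x := fun x => by
    obtain ⟨v, hvx, hv⟩ := exists_sum_embed_eq_and_sum_pNormOn_eq_Omega p hcover x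
    refine ⟨v, hvx, le_of_eq ?_⟩
    simp only [f, g, hvx, hv]
  exact ⟨sInf_range_eq_of_le_comp_of_exists_le hle hex,
    forall_le_iff_exists_forall_le_of_le_comp_of_exists_le hle hex⟩

/-- Equivalence of the latent group lasso problem with its replicated (latent variable)
formulation: the infima coincide and minimizers correspond via `x = P* v`. -/
theorem stmt13 {d n B : ℕ} (Psi : (Fin d → ℝ) →ₗ[ℝ] (Fin n → ℝ)) (y : Fin n → ℝ)
    (τ : ℝ) (hτ : 0 < τ) (p : ℝ≥0∞) [Fact (1 ≤ p)] (hp : 1 < p)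
    (G : Fin B → Finset (Fin d)) (hcover : ∀ j : Fin d, ∃ r, j ∈ G r) :
    let f : (Fin d → ℝ) → ℝ := fun x =>
      (1 / (n : ℝ)) * ∑ i, (Psi x i - y i) ^ 2 + 2 * τ * Omega p G x
    let g : ((r : Fin B) → {j : Fin d // j ∈ G r} → ℝ) → ℝ := fun v =>
      (1 / (n : ℝ)) * ∑ i, (Psi (∑ r, embed (G r) (v r)) i - y i) ^ 2 +
        2 * τ * ∑ r, pNormOn p (v r)
    sInf (Set.range f) = sInf (Set.range g) ∧
    ∀ x : Fin d → ℝ, (∀ x', f x ≤ f x') ↔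
      ∃ v, (∀ v', g v ≤ g v') ∧ x = ∑ r, embed (G r) (v r) :=
  stmt13_general Psi y τ hτ p G hcover
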